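/- Let T be a trivial rack (x·y = x for all x, y) and R an associative ring with unity. Then for all a, b ∈ Δ_R(T), (e + a)·(e + b) = e + a + b = (e + b)·(e + a) in R°[T], and each element e + a has two-sided inverse e − a. Consequently, V₁ = {e + a | a ∈ Δ_R(T)} is an abelian group under the multiplication of R°[T], and the map a ↦ e + a is a group isomorphism from the additive group Δ_R(T) onto V₁. -/
import Mathlib


/-!
Statement 10: Let `T` be a trivial rack (`x·y = x`) and `R` an associative ring with
unity. Then for all `a, b ∈ Δ_R(T)`, `(e + a)·(e + b) = e + a + b = (e + b)·(e + a)` in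
`R°[T]`, and each `e + a` has two-sided inverse `e − a`. Consequently
`V₁ = {e + a | a ∈ Δ_R(T)}` is an abelian group under the multiplication of `R°[T]`, and
`a ↦ e + a` is a group isomorphism from the additive group `Δ_R(T)` onto `V₁`.

`R°[T]` is modelled as `R × (T →₀ R)` with unity `e = (1, 0)`; `e + a` is the pair
`(1, a)`.
-/

variable {T R : Type*}

/-- Multiplication on the free module `T →₀ R` induced by a binary operation on `T`. -/
noncomputable def qmul [Ring R] (op : T → T → T) (u v : T →₀ R) : T →₀ R :=
  u.sum fun x a => v.sum fun y b => Finsupp.single (op x y) (a * b)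

/-- Right scalar action of `R` on `T →₀ R` (multiplying each coefficient on the right). -/
noncomputable def rsmul [Ring R] (s : R) (a : T →₀ R) : T →₀ R :=
  a.sum fun x c => Finsupp.single x (c * s)

/-- Multiplication of the extended rack ring `R°[T] = R × R[T]`:
`(r, a)(s, b) = (rs, r•b + a•s + ab)`. -/
noncomputable def emul [Ring R] (op : T → T → T) (u v : R × (T →₀ R)) : R × (T →₀ R) :=
  (u.1 * v.1, u.1 • v.2 + rsmul v.1 u.2 + qmul op u.2 v.2)

/-- The augmentation homomorphism `R[T] → R`, `Σ αᵢ xᵢ ↦ Σ αᵢ`. -/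
noncomputable def augHom [Ring R] : (T →₀ R) →+ R :=
  Finsupp.liftAddHom fun _ => AddMonoidHom.id R


lemma rsmul_one [Ring R] (a : T →₀ R) : rsmul (1 : R) a = a := by
  simp [rsmul, Finsupp.sum_single]

lemma qmul_trivial [Ring R] (op : T → T → T) (htriv : ∀ x y, op x y = x)
    (u v : T →₀ R) : qmul op u v = rsmul (augHom v) u := by
  unfold qmul rsmul
  refine Finsupp.sum_congr fun x hx => ?_
  simp only [htriv]
  rw [show (augHom (v) : R) = v.sum fun _ b => b from rfl]
  rw [Finsupp.mul_sum, Finsupp.sum, Finsupp.sum]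
  exact (map_sum (Finsupp.singleAddHom x : R →+ (T →₀ R)) _ _).symm

lemma rsmul_zero' [Ring R] (a : T →₀ R) : rsmul (0 : R) a = 0 := by
  simp [rsmul]

theorem stmt_10 [Ring R] (op : T → T → T) (htriv : ∀ x y, op x y = x) :
    (∀ a b : T →₀ R, augHom a = 0 → augHom b = 0 →
      emul op ((1 : R), a) ((1 : R), b) = ((1 : R), a + b) ∧
      emul op ((1 : R), b) ((1 : R), a) = ((1 : R), a + b)) ∧
    (∀ a : T →₀ R, augHom a = 0 →
      emul op ((1 : R), a) ((1 : R), -a) = ((1 : R), 0) ∧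
      emul op ((1 : R), -a) ((1 : R), a) = ((1 : R), 0)) ∧
    Function.Injective (fun a : T →₀ R => (((1 : R), a) : R × (T →₀ R))) := by
  refine ⟨fun a b ha hb => ?_, fun a ha => ?_, fun a b h => ?_⟩
  · refine ⟨?_, ?_⟩ <;>
      simp [emul, rsmul_one, qmul_trivial op htriv, *, rsmul_zero'] <;> abel
  · constructor <;>
    · simp [emul, rsmul_one, qmul_trivial op htriv, *, rsmul_zero']
  · simpa using congrArg Prod.snd h
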